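/- Let V ⊆ ℝ^n be a linear subspace with V ≠ ℝ^n, and let M₁ ∈ ℝ^(d₁×n), …, M_j ∈ ℝ^(d_j×d_{j-1}) be matrices. Suppose there exist nonzero vectors w_i ∈ ℝ^(d_i) for each 1 ≤ i ≤ j. Then there exist vectors v_i (which can be taken arbitrarily small) such that, setting M̃_i = M_i + w_i v_iᵀ, the product M̃_j ⋯ M̃₁ has at least one row not lying in V. -/

import Mathlib

attribute [local instance] Matrix.frobeniusNormedAddCommGroup Matrix.frobeniusNormedSpace

/-- Product `M (b-1) * ⋯ * M a` of a chain of matrices (identity when `b = a`,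
junk value `0` when `b < a`). -/
def chainProd (d : ℕ → ℕ) (M : ∀ i : ℕ, Matrix (Fin (d (i + 1))) (Fin (d i)) ℝ)
    (a : ℕ) : (b : ℕ) → Matrix (Fin (d b)) (Fin (d a)) ℝ
  | 0 => if h : 0 = a then by rw [← h]; exact 1 else 0
  | (b + 1) => if h : b + 1 = a then by rw [← h]; exact 1
      else M b * chainProd d M a b

/-- Extend a `Fin k`-indexed tuple of layer matrices to an `ℕ`-indexed one (by `0`). -/
def ext (d : ℕ → ℕ) (k : ℕ)
    (N : ∀ i : Fin k, Matrix (Fin (d (i.1 + 1))) (Fin (d i.1)) ℝ) :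
    ∀ i : ℕ, Matrix (Fin (d (i + 1))) (Fin (d i)) ℝ :=
  fun i => if h : i < k then N ⟨i, h⟩ else 0

lemma chainProd_zero' (d M) : chainProd d M 0 0 = 1 := rfl

lemma chainProd_succ' (d M b) (h : b + 1 ≠ 0) :
    chainProd d M 0 (b+1) = M b * chainProd d M 0 b := by
  simp [chainProd, h]

lemma chainProd_congr' (d : ℕ → ℕ) (M M' : ∀ i : ℕ, Matrix (Fin (d (i+1))) (Fin (d i)) ℝ)
    (a : ℕ) : ∀ b, (∀ i, i < b → M i = M' i) → chainProd d M a b = chainProd d M' a b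
  | 0, _ => rfl
  | (b+1), h => by
      simp only [chainProd]
      split
      · rfl
      · rw [h b b.lt_succ_self,
          chainProd_congr' d M M' a b (fun i hi => h i (hi.trans b.lt_succ_self))]

lemma notmem_add_smul {n : ℕ} (V : Submodule ℝ (Fin n → ℝ)) {a x : Fin n → ℝ} {c : ℝ}
    (ha : a ∈ V) (hc : c ≠ 0) (hx : x ∉ V) : a + c • x ∉ V := by
  intro h
  have h1 : c • x ∈ V := by simpa using V.sub_mem h ha
  have h2 := V.smul_mem c⁻¹ h1
  rw [smul_smul, inv_mul_cancel₀ hc, one_smul] at h2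
  exact hx h2

lemma norm_single_le {n : ℕ} (ℓ : Fin n) (δ : ℝ) : ‖(Pi.single ℓ δ : Fin n → ℝ)‖ ≤ ‖δ‖ := by
  apply pi_norm_le_iff_of_nonneg (norm_nonneg δ) |>.mpr
  intro i
  rcases eq_or_ne i ℓ with h | h <;> simp [Pi.single_apply, h]

/-- given a proper subspace `V ⊊ ℝⁿ` (with `n = d 0`) and nonzero
vectors `w i`, one can choose arbitrarily small vectors `v i` so that the product
of the perturbed matrices `M i + w i (v i)ᵀ` has a row outside `V`. -/
theorem stmt_8 (d : ℕ → ℕ) (j : ℕ) (hj : 1 ≤ j)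
    (M : ∀ i : ℕ, Matrix (Fin (d (i + 1))) (Fin (d i)) ℝ)
    (V : Submodule ℝ (Fin (d 0) → ℝ)) (hV : V ≠ ⊤)
    (w : ∀ i : ℕ, Fin (d (i + 1)) → ℝ) (hw : ∀ i, i < j → w i ≠ 0)
    (ε : ℝ) (hε : 0 < ε) :
    ∃ v : ∀ i : ℕ, Fin (d i) → ℝ, (∀ i, i < j → ‖v i‖ < ε) ∧
      ∃ ℓ : Fin (d j),
        (chainProd d (fun i => M i + Matrix.vecMulVec (w i) (v i)) 0 j) ℓ ∉ V := by
  revert hw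
  induction j, hj using Nat.le_induction with
  | base =>
    intro hw
    obtain ⟨u, hu⟩ : ∃ u, u ∉ V := by
      by_contra h; push_neg at h; exact hV (Submodule.eq_top_iff'.mpr h)
    have hu0 : u ≠ 0 := fun h => hu (h ▸ V.zero_mem)
    have hun : (0:ℝ) < ‖u‖ := norm_pos_iff.mpr hu0
    obtain ⟨k, hk⟩ : ∃ k, w 0 k ≠ 0 := Function.ne_iff.mp (hw 0 one_pos)
    by_cases hM : (M 0) k ∈ V
    · set c : ℝ := ε / (2 * ‖u‖) with hc
      have hc0 : c ≠ 0 := by positivity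
      refine ⟨Function.update (fun i => (0 : Fin (d i) → ℝ)) 0 (c • u), ?_, k, ?_⟩
      · intro i hi
        interval_cases i
        rw [Function.update_self, norm_smul]
        have : ‖c‖ = ε / (2 * ‖u‖) := by
          rw [Real.norm_eq_abs, abs_of_pos (by positivity)]
        rw [this]
        calc ε / (2 * ‖u‖) * ‖u‖ = ε / 2 := by field_simp
        _ < ε := by linarith
      · have hprod : (chainProd d
            (fun i => M i + Matrix.vecMulVec (w i)
              ((Function.update (fun i => (0 : Fin (d i) → ℝ)) 0 (c • u)) i)) 0 1) k
            = M 0 k + (w 0 k * c) • u := by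
          rw [chainProd_succ' _ _ 0 one_ne_zero]
          funext m
          simp [chainProd_zero', Matrix.mul_apply, Matrix.vecMulVec_apply, Function.update_self, Matrix.one_apply,
            Finset.sum_ite_eq', mul_add, mul_assoc, Pi.add_apply]
          ring
        rw [hprod]
        exact notmem_add_smul V hM (mul_ne_zero hk hc0) hu
    · refine ⟨fun i => 0, fun i hi => by simpa using hε, k, ?_⟩
      have hprod : (chainProd d
          (fun i => M i + Matrix.vecMulVec (w i) (0 : Fin (d i) → ℝ)) 0 1) k = M 0 k := by
        rw [chainProd_succ' _ _ 0 one_ne_zero]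
        funext m
        simp [chainProd_zero', Matrix.mul_apply, Matrix.vecMulVec_apply, Matrix.one_apply, Finset.sum_ite_eq']
      rw [hprod]
      exact hM
  | succ j hj ih =>
    intro hw
    obtain ⟨v, hv, ℓ, hℓ⟩ := ih (fun i hi => hw i (hi.trans j.lt_succ_self))
    set Q := chainProd d (fun i => M i + Matrix.vecMulVec (w i) (v i)) 0 j with hQ
    by_cases hA : ∀ k, (M j * Q) k ∈ V
    · obtain ⟨k, hk⟩ : ∃ k, w j k ≠ 0 := Function.ne_iff.mp (hw j j.lt_succ_self)
      set v' := Function.update v j (Pi.single ℓ (ε/2)) with hv'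
      refine ⟨v', ?_, k, ?_⟩
      · intro i hi
        rcases eq_or_ne i j with rfl | hij
        · rw [hv', Function.update_self]
          calc ‖(Pi.single ℓ (ε/2) : Fin (d i) → ℝ)‖ ≤ ‖ε/2‖ := norm_single_le ℓ _
          _ < ε := by rw [Real.norm_eq_abs, abs_of_pos (by positivity)]; linarith
        · rw [hv', Function.update_of_ne hij]
          exact hv i (Nat.lt_of_le_of_ne (Nat.lt_succ_iff.mp hi) hij)
      · have hQeq : chainProd d (fun i => M i + Matrix.vecMulVec (w i) (v' i)) 0 j = Q := by
          rw [hQ]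
          apply chainProd_congr'
          intro i hi
          rw [hv', Function.update_of_ne (Nat.ne_of_lt hi)]
        have hprod : (chainProd d (fun i => M i + Matrix.vecMulVec (w i) (v' i)) 0 (j+1)) k
            = (M j * Q) k + (w j k * (ε/2)) • Q ℓ := by
          rw [chainProd_succ' _ _ j j.succ_ne_zero, hQeq]
          funext m
          simp only [Matrix.add_apply, Matrix.vecMulVec_apply, hv', Function.update_self,
            Pi.add_apply, Pi.smul_apply, Matrix.mul_apply, add_mul, Finset.sum_add_distrib,
            Pi.single_apply, smul_eq_mul]
          congr 1
          rw [Finset.sum_congr rfl (fun t _ => by rw [mul_ite, mul_zero, ite_mul, zero_mul])]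
          simp [Finset.sum_ite_eq', mul_assoc]
        rw [hprod]
        exact notmem_add_smul V (hA k) (mul_ne_zero hk (by positivity)) hℓ
    · push_neg at hA
      obtain ⟨k, hk⟩ := hA
      set v' := Function.update v j (0 : Fin (d j) → ℝ) with hv'
      refine ⟨v', ?_, k, ?_⟩
      · intro i hi
        rcases eq_or_ne i j with rfl | hij
        · rw [hv', Function.update_self]; simpa using hε
        · rw [hv', Function.update_of_ne hij]
          exact hv i (Nat.lt_of_le_of_ne (Nat.lt_succ_iff.mp hi) hij)
      · have hQeq : chainProd d (fun i => M i + Matrix.vecMulVec (w i) (v' i)) 0 j = Q := by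
          rw [hQ]
          apply chainProd_congr'
          intro i hi
          rw [hv', Function.update_of_ne (Nat.ne_of_lt hi)]
        have hprod : (chainProd d (fun i => M i + Matrix.vecMulVec (w i) (v' i)) 0 (j+1)) k
            = (M j * Q) k := by
          rw [chainProd_succ' _ _ j j.succ_ne_zero, hQeq]
          funext m
          simp [Matrix.add_apply, Matrix.vecMulVec_apply, hv', Function.update_self,
            Matrix.mul_apply]
        rw [hprod]
        exact hk
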